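/- Every GL₂(ℤ)-conjugacy class of nonzero nilpotent matrices in M₂(ℤ) contains exactly one matrix of the form [[0,m],[0,0]] with m ∈ ℕ, m ≥ 1. -/

import Mathlib

/-!
Since `B² = 0`, every column of `B` lies in `ker B`; dividing a nonzero column by the gcd of its
entries gives a primitive vector `v ∈ ker B`. Completing `v` to a basis of `ℤ²` (Bézout) conjugates
`B` to a square-zero matrix with zero first column, i.e. to `!![0, s; 0, 0]` with `s ≠ 0`, and
conjugating by `diag(1, -1)` makes `s` positive. Conversely, if `!![0, m; 0, 0]` and
`!![0, n; 0, 0]` are conjugate then `m ∣ n`, since every entry of `P * !![0, m; 0, 0] * Q` is a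
multiple of `m`; so `m = n`.
-/

open Matrix

theorem isConj_iff_exists_units_inv_mul_mul_eq {M : Type*} [Monoid M] {a b : M} :
    IsConj a b ↔ ∃ c : Mˣ, ↑c⁻¹ * a * ↑c = b := by
  constructor
  · rintro ⟨c, hc⟩
    exact ⟨c⁻¹, by rw [inv_inv, hc.eq, mul_assoc, Units.mul_inv, mul_one]⟩
  · rintro ⟨c, rfl⟩
    exact ⟨c⁻¹, by simp [SemiconjBy, mul_assoc]⟩

theorem eq_of_mul_self_eq_zero_of_col_zero {R : Type*} [Semiring R] [NoZeroDivisors R]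
    {N : Matrix (Fin 2) (Fin 2) R} (h : N * N = 0) (h0 : N 0 0 = 0) (h1 : N 1 0 = 0) :
    N = !![0, N 0 1; 0, 0] := by
  have h11 : N 1 1 * N 1 1 = 0 := by
    simpa [mul_apply, Fin.sum_univ_two, h1] using congrFun (congrFun h 1) 1
  ext i j
  fin_cases i <;> fin_cases j <;> simp [h0, h1, mul_self_eq_zero.mp h11]

theorem isConj_upperCorner_neg {R : Type*} [CommRing R] (s : R) :
    IsConj !![0, s; 0, 0] !![0, -s; 0, 0] :=
  ⟨⟨!![1, 0; 0, -1], !![1, 0; 0, -1], by simp [one_fin_two], by simp [one_fin_two]⟩,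
    by simp [SemiconjBy]⟩

theorem dvd_of_isConj_upperCorner {R : Type*} [CommSemiring R] {m n : R}
    (h : IsConj !![0, m; 0, 0] !![0, n; 0, 0]) : m ∣ n := by
  obtain ⟨c, hc⟩ := isConj_iff_exists_units_inv_mul_mul_eq.mp h
  have hm : !![0, m; 0, 0] = m • (!![0, 1; 0, 0] : Matrix (Fin 2) (Fin 2) R) := by
    ext i j; fin_cases i <;> fin_cases j <;> simp
  rw [hm, Matrix.mul_smul, Matrix.smul_mul] at hc
  exact ⟨_, by simpa using (congrFun (congrFun hc 0) 1).symm⟩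

theorem exists_isCoprime_mulVec_eq_zero {B : Matrix (Fin 2) (Fin 2) ℤ} {u : Fin 2 → ℤ}
    (hu : u ≠ 0) (h : B *ᵥ u = 0) : ∃ p q : ℤ, IsCoprime p q ∧ B *ᵥ ![p, q] = 0 := by
  have hgcd : 0 < Int.gcd (u 0) (u 1) := by
    refine Int.gcd_pos_iff.mpr (not_and_or.mp fun h0 => hu ?_)
    ext i; fin_cases i <;> simp [h0.1, h0.2]
  obtain ⟨g, p, q, hg, hpq, hp, hq⟩ := Int.exists_gcd_one' hgcd
  have hu : u = (g : ℤ) • ![p, q] := by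
    ext i; fin_cases i <;> simp [hp, hq, mul_comm]
  rw [hu, mulVec_smul] at h
  exact ⟨p, q, Int.isCoprime_iff_gcd_eq_one.mpr hpq, (smul_eq_zero.mp h).resolve_left (by omega)⟩

theorem IsCoprime.exists_GL_mulVec_single_zero_eq {R : Type*} [CommRing R] {p q : R}
    (h : IsCoprime p q) :
    ∃ C : GL (Fin 2) R, (C : Matrix (Fin 2) (Fin 2) R) *ᵥ Pi.single 0 1 = ![p, q] := by
  obtain ⟨u, v, huv⟩ := h
  have hdet : IsUnit (!![p, -v; q, u] : Matrix (Fin 2) (Fin 2) R).det := by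
    rw [det_fin_two_of]
    convert isUnit_one
    linear_combination huv
  refine ⟨((isUnit_iff_isUnit_det _).mpr hdet).unit, ?_⟩
  ext i; fin_cases i <;> simp

theorem exists_isConj_upperCorner_of_mul_self_eq_zero {B : Matrix (Fin 2) (Fin 2) ℤ} (hB : B ≠ 0)
    (hnil : B * B = 0) : ∃ s : ℤ, s ≠ 0 ∧ IsConj B !![0, s; 0, 0] := by
  obtain ⟨j, hj⟩ : ∃ j, B.col j ≠ 0 := by
    by_contra! h
    exact hB (Matrix.ext fun i j => congrFun (h j) i)
  have hBj : B *ᵥ B.col j = 0 := by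
    rw [← mulVec_single_one, mulVec_mulVec, hnil, zero_mulVec]
  obtain ⟨p, q, hpq, hker⟩ := exists_isCoprime_mulVec_eq_zero hj hBj
  obtain ⟨C, hC⟩ := hpq.exists_GL_mulVec_single_zero_eq
  set N : Matrix (Fin 2) (Fin 2) ℤ := C⁻¹.val * B * C.val with hN
  have hNN : N * N = 0 := by
    simpa only [sq, hnil, mul_zero, zero_mul] using Units.conj_pow' C B 2
  have hNcol : N.col 0 = 0 := by
    rw [← mulVec_single_one, hN, ← mulVec_mulVec, ← mulVec_mulVec, hC, hker, mulVec_zero]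
  have hNeq := eq_of_mul_self_eq_zero_of_col_zero hNN (congrFun hNcol 0) (congrFun hNcol 1)
  have hconj : IsConj B N := isConj_iff_exists_units_inv_mul_mul_eq.mpr ⟨C, rfl⟩
  refine ⟨N 0 1, fun h0 => hB ?_, hNeq ▸ hconj⟩
  have hN0 : N = 0 := by
    rw [hNeq, h0]
    simpa using (eta_fin_two (0 : Matrix (Fin 2) (Fin 2) ℤ)).symm
  rwa [hN, Units.mul_left_eq_zero, Units.mul_right_eq_zero] at hN0

theorem stmt_17 (B : Matrix (Fin 2) (Fin 2) ℤ) (hB : B ≠ 0) (hnil : B * B = 0) :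
    ∃! m : ℕ, 1 ≤ m ∧ ∃ C : GL (Fin 2) ℤ,
      (↑(C⁻¹) : Matrix (Fin 2) (Fin 2) ℤ) * B * (↑C : Matrix (Fin 2) (Fin 2) ℤ) =
        !![0, (m : ℤ); 0, 0] := by
  obtain ⟨s, hs, hBs⟩ := exists_isConj_upperCorner_of_mul_self_eq_zero hB hnil
  have hBabs : IsConj B !![0, (s.natAbs : ℤ); 0, 0] := by
    rcases le_or_gt 0 s with h | h
    · rwa [Int.natCast_natAbs, abs_of_nonneg h]
    · rw [Int.natCast_natAbs, abs_of_neg h]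
      exact hBs.trans (isConj_upperCorner_neg s)
  simp only [← isConj_iff_exists_units_inv_mul_mul_eq]
  refine ⟨s.natAbs, ⟨Int.natAbs_pos.mpr hs, hBabs⟩, fun m ⟨_, hBm⟩ => Nat.dvd_antisymm ?_ ?_⟩
  · exact Int.natCast_dvd_natCast.mp (dvd_of_isConj_upperCorner (hBm.symm.trans hBabs))
  · exact Int.natCast_dvd_natCast.mp (dvd_of_isConj_upperCorner (hBabs.symm.trans hBm))
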